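/- Let (S,R) be an argumentation network and V₀ : S → [0,1] any initial assignment. Then for every X ∈ S the Gabbay-Rodrigues iteration sequence V_i(X) converges as i → ∞, and its limit lies in the set {0, 1/2, 1}. -/
import Mathlib


open Filter Topology

variable {S : Type*}

/-- Maximum of `V` over the attackers of `X` (i.e. `{Y | R Y X}`),
with the convention that the maximum over the empty set is `0`. -/
noncomputable def attMax [Fintype S] (R : S → S → Prop) [DecidableRel R] (V : S → ℝ) (X : S) : ℝ :=
  (Finset.univ.filter (fun Y => R Y X)).fold max 0 V

/-- One step of the Gabbay-Rodrigues iteration. -/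
noncomputable def grStep [Fintype S] (R : S → S → Prop) [DecidableRel R] (V : S → ℝ) (X : S) : ℝ :=
  (1 - V X) * min (1/2) (1 - attMax R V X) + V X * max (1/2) (1 - attMax R V X)

/-- The Gabbay-Rodrigues iteration sequence from the initial assignment `V0`. -/
noncomputable def grSeq [Fintype S] (R : S → S → Prop) [DecidableRel R] (V0 : S → ℝ) : ℕ → S → ℝ
  | 0 => V0
  | i + 1 => grStep R (grSeq R V0 i)

def inSet (V : S → ℝ) : Set S := {X | V X = 1}

def outSet (V : S → ℝ) : Set S := {X | V X = 0}

def conflictFree (R : S → S → Prop) (E : Set S) : Prop := ∀ X ∈ E, ∀ Y ∈ E, ¬ R X Y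

def acceptable (R : S → S → Prop) (E : Set S) (X : S) : Prop := ∀ Y, R Y X → ∃ Z ∈ E, R Z Y

def admissible (R : S → S → Prop) (E : Set S) : Prop :=
  conflictFree R E ∧ ∀ X ∈ E, acceptable R E X

def completeExt (R : S → S → Prop) (E : Set S) : Prop :=
  admissible R E ∧ ∀ X, acceptable R E X → X ∈ E

/-- `E⁺` : the set of arguments attacked by `E`. -/
def plusSet (R : S → S → Prop) (E : Set S) : Set S := {X | ∃ Y ∈ E, R Y X}

/-- The GR sequence is stable at iteration `k` if every node with a crisp value at
iteration `k` keeps that value at iteration `k+1`. -/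
def grStable [Fintype S] (R : S → S → Prop) [DecidableRel R] (V0 : S → ℝ) (k : ℕ) : Prop :=
  ∀ X : S, (grSeq R V0 k X = 0 ∨ grSeq R V0 k X = 1) → grSeq R V0 (k + 1) X = grSeq R V0 k X

section Aux

variable [Fintype S] {R : S → S → Prop} [DecidableRel R]

lemma attMax_nonneg (V : S → ℝ) (X : S) : 0 ≤ attMax R V X := by
  unfold attMax
  rw [Finset.le_fold_max]
  exact Or.inl le_rfl

lemma le_attMax {V : S → ℝ} {X Y : S} (h : R Y X) : V Y ≤ attMax R V X := by
  unfold attMax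
  rw [Finset.le_fold_max]
  exact Or.inr ⟨Y, Finset.mem_filter.2 ⟨Finset.mem_univ _, h⟩, le_rfl⟩

lemma attMax_le {V : S → ℝ} {X : S} {c : ℝ} (h0 : 0 ≤ c) (h : ∀ Y, R Y X → V Y ≤ c) :
    attMax R V X ≤ c := by
  unfold attMax
  rw [Finset.fold_max_le]
  exact ⟨h0, fun Y hY => h Y (Finset.mem_filter.1 hY).2⟩

lemma grStep_of_le {V : S → ℝ} {X : S} (h : attMax R V X ≤ 1/2) :
    grStep R V X = 1/2 + V X * (1/2 - attMax R V X) := by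
  unfold grStep
  rw [min_eq_left (by linarith), max_eq_right (by linarith)]
  ring

lemma grStep_of_ge {V : S → ℝ} {X : S} (h : 1/2 ≤ attMax R V X) :
    grStep R V X = (1 - attMax R V X) + V X * (attMax R V X - 1/2) := by
  unfold grStep
  rw [min_eq_right (by linarith), max_eq_left (by linarith)]
  ring

lemma grSeq_mem {V0 : S → ℝ} (hV0 : ∀ X, V0 X ∈ Set.Icc (0:ℝ) 1) :
    ∀ i X, grSeq R V0 i X ∈ Set.Icc (0:ℝ) 1 := by
  intro i
  induction i with
  | zero => exact hV0
  | succ i ih =>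
    intro X
    have hM0 : 0 ≤ attMax R (grSeq R V0 i) X := attMax_nonneg _ _
    have hM1 : attMax R (grSeq R V0 i) X ≤ 1 :=
      attMax_le zero_le_one fun Y _ => (ih Y).2
    have h0 := (ih X).1
    have h1 := (ih X).2
    have : grSeq R V0 (i+1) X = grStep R (grSeq R V0 i) X := rfl
    rw [this]
    rcases le_total (attMax R (grSeq R V0 i) X) (1/2) with h | h
    · rw [grStep_of_le h]
      constructor <;> nlinarith
    · rw [grStep_of_ge h]
      constructor <;> nlinarith

lemma abs_grStep_sub_half {V : S → ℝ} {X : S} (hV : V X ∈ Set.Icc (0:ℝ) 1) :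
    |grStep R V X - 1/2| ≤ (1/2 + |V X - 1/2|) * |attMax R V X - 1/2| := by
  obtain ⟨h0, h1⟩ := hV
  rcases le_total (attMax R V X) (1/2) with h | h
  · rw [grStep_of_le h, abs_of_nonpos (by linarith : attMax R V X - 1/2 ≤ 0), neg_sub]
    have he : |(1:ℝ)/2 + V X * (1/2 - attMax R V X) - 1/2| = V X * (1/2 - attMax R V X) := by
      rw [show (1:ℝ)/2 + V X * (1/2 - attMax R V X) - 1/2 = V X * (1/2 - attMax R V X) by ring]
      exact abs_of_nonneg (by nlinarith)
    rw [he]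
    have hle : V X ≤ 1/2 + |V X - 1/2| := by
      have := le_abs_self (V X - 1/2); linarith
    exact mul_le_mul_of_nonneg_right hle (by linarith : (0:ℝ) ≤ 1/2 - attMax R V X)
  · rw [grStep_of_ge h, abs_of_nonneg (by linarith : (0:ℝ) ≤ attMax R V X - 1/2)]
    have he : |(1 - attMax R V X) + V X * (attMax R V X - 1/2) - 1/2|
        = (1 - V X) * (attMax R V X - 1/2) := by
      rw [show (1 - attMax R V X) + V X * (attMax R V X - 1/2) - 1/2
          = -((1 - V X) * (attMax R V X - 1/2)) by ring]
      rw [abs_neg]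
      exact abs_of_nonneg (by nlinarith)
    rw [he]
    have hle : 1 - V X ≤ 1/2 + |V X - 1/2| := by
      have := neg_abs_le (V X - 1/2); linarith
    exact mul_le_mul_of_nonneg_right hle (by linarith : (0:ℝ) ≤ attMax R V X - 1/2)

lemma grStep_pos {V : S → ℝ} {X : S} (hV : ∀ Y, V Y ∈ Set.Icc (0:ℝ) 1) (h : 0 < V X) :
    0 < grStep R V X := by
  have hM0 : 0 ≤ attMax R V X := attMax_nonneg _ _
  have hM1 : attMax R V X ≤ 1 := attMax_le zero_le_one fun Y _ => (hV Y).2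
  have h1 := (hV X).2
  unfold grStep
  have hmin : (0:ℝ) ≤ min (1/2) (1 - attMax R V X) := le_min (by norm_num) (by linarith)
  have hmax : (1:ℝ)/2 ≤ max (1/2) (1 - attMax R V X) := le_max_left _ _
  nlinarith [mul_nonneg (by linarith : (0:ℝ) ≤ 1 - V X) hmin,
    mul_le_mul_of_nonneg_left hmax h.le]

lemma grStep_lt_one {V : S → ℝ} {X : S} (hV : ∀ Y, V Y ∈ Set.Icc (0:ℝ) 1) (h : V X < 1) :
    grStep R V X < 1 := by
  have hM0 : 0 ≤ attMax R V X := attMax_nonneg _ _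
  have hM1 : attMax R V X ≤ 1 := attMax_le zero_le_one fun Y _ => (hV Y).2
  have h0 := (hV X).1
  unfold grStep
  have hmin : min (1/2) (1 - attMax R V X) ≤ 1/2 := min_le_left _ _
  have hmax : max (1/2) (1 - attMax R V X) ≤ 1 := max_le (by norm_num) (by linarith)
  nlinarith [mul_le_mul_of_nonneg_left hmin (by linarith : (0:ℝ) ≤ 1 - V X),
    mul_le_mul_of_nonneg_left hmax h0]

lemma tendsto_rec_zero {a ε : ℕ → ℝ} {r C : ℝ} (hr0 : 0 ≤ r) (hr1 : r < 1)
    (ha0 : ∀ n, 0 ≤ a n) (haC : ∀ n, a n ≤ C)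
    (hε : Tendsto ε atTop (𝓝 0))
    (hrec : ∀ᶠ n in atTop, a (n + 1) ≤ r * a n + ε n) :
    Tendsto a atTop (𝓝 0) := by
  rw [Metric.tendsto_atTop]
  intro δ hδ
  have hδ2 : (0:ℝ) < (1 - r) * (δ / 2) := mul_pos (by linarith) (by linarith)
  have hε' : ∀ᶠ n in atTop, ε n ≤ (1 - r) * (δ / 2) :=
    (hε.eventually_lt_const hδ2).mono fun n hn => hn.le
  obtain ⟨N, hN⟩ := eventually_atTop.1 (hrec.and hε')
  set C' : ℝ := max C 0 with hC'
  have hC'0 : 0 ≤ C' := le_max_right _ _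
  have key : ∀ k, a (N + k) ≤ r ^ k * C' + δ / 2 := by
    intro k
    induction k with
    | zero =>
      simp only [Nat.add_zero, pow_zero, one_mul]
      have := haC N
      have h2 : C ≤ C' := le_max_left _ _
      linarith
    | succ k ih =>
      have h1 := (hN (N + k) (Nat.le_add_right _ _)).1
      have h2 := (hN (N + k) (Nat.le_add_right _ _)).2
      have hmul := mul_le_mul_of_nonneg_left ih hr0
      have heq : N + (k + 1) = (N + k) + 1 := rfl
      rw [heq]
      calc a ((N + k) + 1) ≤ r * a (N + k) + ε (N + k) := h1
        _ ≤ r * (r ^ k * C' + δ / 2) + (1 - r) * (δ / 2) := by linarith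
        _ = r ^ (k + 1) * C' + δ / 2 := by ring
  obtain ⟨K, hK⟩ : ∃ K, r ^ K * C' < δ / 2 := by
    have hpow : Tendsto (fun n => r ^ n * C') atTop (𝓝 0) := by
      simpa using (tendsto_pow_atTop_nhds_zero_of_lt_one hr0 hr1).mul_const C'
    exact (hpow.eventually_lt_const (by linarith : (0:ℝ) < δ / 2)).exists
  refine ⟨N + K, fun n hn => ?_⟩
  have hKle : K ≤ n - N := by omega
  have hNle : N ≤ n := by omega
  have h1 : a n ≤ r ^ (n - N) * C' + δ / 2 := by
    have := key (n - N)
    rwa [Nat.add_sub_cancel' hNle] at this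
  have h2 : r ^ (n - N) ≤ r ^ K := pow_le_pow_of_le_one hr0 hr1.le hKle
  have h3 : r ^ (n - N) * C' ≤ r ^ K * C' := mul_le_mul_of_nonneg_right h2 hC'0
  rw [Real.dist_eq, sub_zero, abs_of_nonneg (ha0 n)]
  linarith

lemma tendsto_zero_of_attacker {V0 : S → ℝ} (hV0 : ∀ X, V0 X ∈ Set.Icc (0:ℝ) 1)
    {X Y : S} (hR : R Y X)
    (hY : Tendsto (fun i => grSeq R V0 i Y) atTop (𝓝 1)) :
    Tendsto (fun i => grSeq R V0 i X) atTop (𝓝 0) := by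
  have hmem := grSeq_mem (R := R) hV0
  have hM1 : Tendsto (fun i => attMax R (grSeq R V0 i) X) atTop (𝓝 1) :=
    tendsto_of_tendsto_of_tendsto_of_le_of_le hY tendsto_const_nhds
      (fun i => le_attMax hR)
      (fun i => attMax_le zero_le_one fun Z _ => (hmem i Z).2)
  have hev : ∀ᶠ i in atTop, 1/2 ≤ attMax R (grSeq R V0 i) X :=
    (hM1.eventually_const_lt (by norm_num : (1:ℝ)/2 < 1)).mono fun i hi => hi.le
  have hrec : ∀ᶠ i in atTop,
      grSeq R V0 (i + 1) X ≤ (1/2) * grSeq R V0 i X + (1 - attMax R (grSeq R V0 i) X) := by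
    filter_upwards [hev] with i hi
    have hstep : grSeq R V0 (i+1) X = grStep R (grSeq R V0 i) X := rfl
    rw [hstep, grStep_of_ge hi]
    have h0 := (hmem i X).1
    have hMle : attMax R (grSeq R V0 i) X ≤ 1 :=
      attMax_le zero_le_one fun Z _ => (hmem i Z).2
    nlinarith
  have hε : Tendsto (fun i => 1 - attMax R (grSeq R V0 i) X) atTop (𝓝 0) := by
    have h2 : Tendsto (fun i => (1:ℝ) - attMax R (grSeq R V0 i) X) atTop (𝓝 (1 - 1)) :=
      Tendsto.sub tendsto_const_nhds hM1
    simpa using h2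
  exact tendsto_rec_zero (by norm_num) (by norm_num)
    (fun i => (hmem i X).1) (fun i => (hmem i X).2) hε hrec

lemma tendsto_one_of_attackers {V0 : S → ℝ} (hV0 : ∀ X, V0 X ∈ Set.Icc (0:ℝ) 1)
    {X : S} (h : ∀ Y, R Y X → Tendsto (fun i => grSeq R V0 i Y) atTop (𝓝 0)) :
    Tendsto (fun i => grSeq R V0 i X) atTop (𝓝 1) := by
  have hmem := grSeq_mem (R := R) hV0
  have hMten : Tendsto (fun i => attMax R (grSeq R V0 i) X) atTop (𝓝 0) := by
    have hsum : Tendsto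
        (fun i => ∑ Y ∈ Finset.univ.filter (fun Y => R Y X), grSeq R V0 i Y) atTop (𝓝 0) := by
      have := tendsto_finset_sum (Finset.univ.filter (fun Y => R Y X))
        (fun Y hY => h Y (Finset.mem_filter.1 hY).2)
      simpa using this
    refine tendsto_of_tendsto_of_tendsto_of_le_of_le tendsto_const_nhds hsum
      (fun i => attMax_nonneg _ _) (fun i => ?_)
    refine attMax_le (Finset.sum_nonneg fun Y _ => (hmem i Y).1) (fun Y hY => ?_)
    exact Finset.single_le_sum (fun Z _ => (hmem i Z).1)
      (Finset.mem_filter.2 ⟨Finset.mem_univ _, hY⟩)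
  have hev : ∀ᶠ i in atTop, attMax R (grSeq R V0 i) X ≤ 1/2 :=
    (hMten.eventually_lt_const (by norm_num : (0:ℝ) < 1/2)).mono fun i hi => hi.le
  have hrec : ∀ᶠ i in atTop,
      (1 - grSeq R V0 (i + 1) X) ≤ (1/2) * (1 - grSeq R V0 i X) + attMax R (grSeq R V0 i) X := by
    filter_upwards [hev] with i hi
    have hstep : grSeq R V0 (i+1) X = grStep R (grSeq R V0 i) X := rfl
    rw [hstep, grStep_of_le hi]
    have h1 := (hmem i X).2
    have hM0 : 0 ≤ attMax R (grSeq R V0 i) X := attMax_nonneg _ _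
    nlinarith
  have hz : Tendsto (fun i => 1 - grSeq R V0 i X) atTop (𝓝 0) :=
    tendsto_rec_zero (a := fun i => 1 - grSeq R V0 i X) (C := 1) (by norm_num) (by norm_num)
      (fun i => by show (0:ℝ) ≤ 1 - grSeq R V0 i X; linarith [(hmem i X).2])
      (fun i => by show (1:ℝ) - grSeq R V0 i X ≤ 1; linarith [(hmem i X).1])
      hMten hrec
  have : Tendsto (fun i => 1 - (1 - grSeq R V0 i X)) atTop (𝓝 (1 - 0)) :=
    tendsto_const_nhds.sub hz
  simpa using this

lemma grSeq_eventually_pos {V0 : S → ℝ} (hV0 : ∀ X, V0 X ∈ Set.Icc (0:ℝ) 1)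
    {X : S} (h : ¬ Tendsto (fun i => grSeq R V0 i X) atTop (𝓝 0)) :
    ∀ᶠ i in atTop, 0 < grSeq R V0 i X := by
  have hmem := grSeq_mem (R := R) hV0
  have hex : ∃ j, grSeq R V0 j X ≠ 0 := by
    by_contra hc
    push_neg at hc
    refine h ?_
    have : (fun i => grSeq R V0 i X) = fun _ => 0 := funext hc
    rw [this]; exact tendsto_const_nhds
  obtain ⟨j, hj⟩ := hex
  have hpos : ∀ i, j ≤ i → 0 < grSeq R V0 i X := by
    intro i hi
    induction i, hi using Nat.le_induction with
    | base => exact lt_of_le_of_ne (hmem j X).1 (Ne.symm hj)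
    | succ i hji ih => exact grStep_pos (fun Y => hmem i Y) ih
  exact eventually_atTop.2 ⟨j, hpos⟩

lemma grSeq_eventually_lt_one {V0 : S → ℝ} (hV0 : ∀ X, V0 X ∈ Set.Icc (0:ℝ) 1)
    {X : S} (h : ¬ Tendsto (fun i => grSeq R V0 i X) atTop (𝓝 1)) :
    ∀ᶠ i in atTop, grSeq R V0 i X < 1 := by
  have hmem := grSeq_mem (R := R) hV0
  have hex : ∃ j, grSeq R V0 j X ≠ 1 := by
    by_contra hc
    push_neg at hc
    refine h ?_
    have : (fun i => grSeq R V0 i X) = fun _ => 1 := funext hc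
    rw [this]; exact tendsto_const_nhds
  obtain ⟨j, hj⟩ := hex
  have hlt : ∀ i, j ≤ i → grSeq R V0 i X < 1 := by
    intro i hi
    induction i, hi using Nat.le_induction with
    | base => exact lt_of_le_of_ne (hmem j X).2 hj
    | succ i hji ih => exact grStep_lt_one (fun Y => hmem i Y) ih
  exact eventually_atTop.2 ⟨j, hlt⟩

lemma tendsto_half_of_U {V0 : S → ℝ} (hV0 : ∀ X, V0 X ∈ Set.Icc (0:ℝ) 1)
    {X : S} (hX1 : ¬ Tendsto (fun i => grSeq R V0 i X) atTop (𝓝 1))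
    (hX0 : ¬ Tendsto (fun i => grSeq R V0 i X) atTop (𝓝 0)) :
    Tendsto (fun i => grSeq R V0 i X) atTop (𝓝 (1/2)) := by
  classical
  have hmem := grSeq_mem (R := R) hV0
  set U : Set S := {Z | ¬ Tendsto (fun i => grSeq R V0 i Z) atTop (𝓝 1) ∧
      ¬ Tendsto (fun i => grSeq R V0 i Z) atTop (𝓝 0)} with hUdef
  have hXU : X ∈ U := ⟨hX1, hX0⟩
  have hUatt : ∀ Z ∈ U, ∃ Y, R Y Z ∧ Y ∈ U := by
    intro Z hZ
    have hnall : ¬ ∀ Y, R Y Z → Tendsto (fun i => grSeq R V0 i Y) atTop (𝓝 0) :=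
      fun hall => hZ.1 (tendsto_one_of_attackers hV0 hall)
    push_neg at hnall
    obtain ⟨Y, hRY, hY0⟩ := hnall
    refine ⟨Y, hRY, ?_, hY0⟩
    intro hY1
    exact hZ.2 (tendsto_zero_of_attacker hV0 hRY hY1)
  have hUZatt : ∀ Z ∈ U, ∀ Y, R Y Z →
      Y ∈ U ∨ Tendsto (fun i => grSeq R V0 i Y) atTop (𝓝 0) := by
    intro Z hZ Y hRY
    by_cases hY0 : Tendsto (fun i => grSeq R V0 i Y) atTop (𝓝 0)
    · exact Or.inr hY0
    · refine Or.inl ⟨?_, hY0⟩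
      intro hY1
      exact hZ.2 (tendsto_zero_of_attacker hV0 hRY hY1)
  have E1 : ∀ᶠ i in atTop, ∀ Y : S,
      Tendsto (fun i => grSeq R V0 i Y) atTop (𝓝 0) → grSeq R V0 i Y < 1/2 := by
    rw [eventually_all]
    intro Y
    by_cases hY : Tendsto (fun i => grSeq R V0 i Y) atTop (𝓝 0)
    · exact (hY.eventually_lt_const (by norm_num : (0:ℝ) < 1/2)).mono fun i hi _ => hi
    · exact Eventually.of_forall fun i h => absurd h hY
  have E2 : ∀ᶠ i in atTop, ∀ Z : S, Z ∈ U → (0 < grSeq R V0 i Z ∧ grSeq R V0 i Z < 1) := by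
    rw [eventually_all]
    intro Z
    by_cases hZ : Z ∈ U
    · filter_upwards [grSeq_eventually_pos hV0 hZ.2, grSeq_eventually_lt_one hV0 hZ.1]
        with i h1 h2 _
      exact ⟨h1, h2⟩
    · exact Eventually.of_forall fun i h => absurd h hZ
  obtain ⟨N, hN⟩ := eventually_atTop.1 (E1.and E2)
  set Ufin : Finset S := Finset.univ.filter (· ∈ U) with hUfin
  have hXUfin : X ∈ Ufin := Finset.mem_filter.2 ⟨Finset.mem_univ _, hXU⟩
  have hUne : Ufin.Nonempty := ⟨X, hXUfin⟩
  set B : ℝ := Ufin.sup' hUne (fun Z => |grSeq R V0 N Z - 1/2|) with hBdef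
  have hB0 : 0 ≤ B := le_trans (abs_nonneg _) (Finset.le_sup' (fun Z => |grSeq R V0 N Z - 1/2|) hXUfin)
  have hBlt : B < 1/2 := by
    rw [hBdef, Finset.sup'_lt_iff]
    intro Z hZ
    have hZU : Z ∈ U := (Finset.mem_filter.1 hZ).2
    obtain ⟨h1, h2⟩ := (hN N le_rfl).2 Z hZU
    rw [abs_lt]
    constructor <;> linarith
  set r : ℝ := 1/2 + B with hrdef
  have hr0 : 0 ≤ r := by rw [hrdef]; linarith
  have hr1 : r < 1 := by rw [hrdef]; linarith
  have key : ∀ k, ∀ Z ∈ U, |grSeq R V0 (N + k) Z - 1/2| ≤ B * r ^ k := by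
    intro k
    induction k with
    | zero =>
      intro Z hZ
      have h := Finset.le_sup' (fun Z => |grSeq R V0 N Z - 1/2|)
        (Finset.mem_filter.2 ⟨Finset.mem_univ Z, hZ⟩)
      rw [Nat.add_zero, pow_zero, mul_one]
      exact h
    | succ k ih =>
      intro Z hZ
      have hrk0 : 0 ≤ r ^ k := pow_nonneg hr0 k
      have hrk1 : r ^ k ≤ 1 := pow_le_one₀ hr0 hr1.le
      have hBr0 : 0 ≤ B * r ^ k := mul_nonneg hB0 hrk0
      have hBrB : B * r ^ k ≤ B := mul_le_of_le_one_right hB0 hrk1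
      have hMub : attMax R (grSeq R V0 (N + k)) Z ≤ 1/2 + B * r ^ k := by
        refine attMax_le (by linarith) (fun Y hRY => ?_)
        rcases hUZatt Z hZ Y hRY with hYU | hY0
        · linarith [(abs_le.1 (ih Y hYU)).2]
        · linarith [(hN (N + k) (Nat.le_add_right _ _)).1 Y hY0]
      have hMlb : 1/2 - B * r ^ k ≤ attMax R (grSeq R V0 (N + k)) Z := by
        obtain ⟨Y, hRY, hYU⟩ := hUatt Z hZ
        have h1 := (abs_le.1 (ih Y hYU)).1
        exact le_trans (by linarith) (le_attMax hRY)
      have hMabs : |attMax R (grSeq R V0 (N + k)) Z - 1/2| ≤ B * r ^ k :=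
        abs_le.2 ⟨by linarith, by linarith⟩
      have hstep : grSeq R V0 (N + (k + 1)) Z = grStep R (grSeq R V0 (N + k)) Z := rfl
      rw [hstep]
      calc |grStep R (grSeq R V0 (N + k)) Z - 1/2|
          ≤ (1/2 + |grSeq R V0 (N + k) Z - 1/2|) * |attMax R (grSeq R V0 (N + k)) Z - 1/2| :=
            abs_grStep_sub_half (hmem _ Z)
        _ ≤ (1/2 + B) * (B * r ^ k) := by
            refine mul_le_mul ?_ hMabs (abs_nonneg _) (by linarith)
            linarith [(ih Z hZ)]
        _ = B * r ^ (k + 1) := by rw [hrdef]; ring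
  have hub : Tendsto (fun k => B * r ^ k) atTop (𝓝 0) := by
    simpa using ((tendsto_pow_atTop_nhds_zero_of_lt_one hr0 hr1).const_mul B)
  have hdist : Tendsto (fun k => dist (grSeq R V0 (k + N) X) (1/2)) atTop (𝓝 0) := by
    refine tendsto_of_tendsto_of_tendsto_of_le_of_le (g := fun _ => (0:ℝ))
      (h := fun k => B * r ^ k) tendsto_const_nhds hub (fun k => dist_nonneg) (fun k => ?_)
    rw [Real.dist_eq, Nat.add_comm]
    exact key k X hXU
  exact (tendsto_add_atTop_iff_nat N).1 (tendsto_iff_dist_tendsto_zero.2 hdist)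

end Aux

theorem stmt1 [Fintype S] [Nonempty S] (R : S → S → Prop) [DecidableRel R]
    (V0 : S → ℝ) (hV0 : ∀ X, V0 X ∈ Set.Icc (0:ℝ) 1) :
    ∀ X : S, ∃ L : ℝ, L ∈ ({0, 1/2, 1} : Set ℝ) ∧
      Tendsto (fun i => grSeq R V0 i X) atTop (nhds L) := by
  intro X
  by_cases h1 : Tendsto (fun i => grSeq R V0 i X) atTop (nhds 1)
  · exact ⟨1, by simp, h1⟩
  by_cases h0 : Tendsto (fun i => grSeq R V0 i X) atTop (nhds 0)
  · exact ⟨0, by simp, h0⟩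
  · exact ⟨1/2, by simp, tendsto_half_of_U hV0 h1 h0⟩
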